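/- Let ℓ be a nonnegative integer, with the convention that P_k and Q_k are taken to be the zero polynomial for k ≤ 0. Define 𝔊(x,y,z) = Q_{4ℓ+1}(x,y)·sin z − Q_{4ℓ+1}(x,z)·sin y + (8ℓ+2)·Q_{4ℓ}(y,z)·cos x + Q_{4ℓ+1}(z,x)·cos y + Q_{4ℓ+1}(y,x)·cos z − (8ℓ+2)·P_{4ℓ}(y,z)·sin x + 4ℓ(8ℓ+2)·P_{4ℓ−1}(x,y)·cos z + 4ℓ(8ℓ+2)·P_{4ℓ−1}(x,z)·cos y, and let V be the vector field on ℝ³ given by V(x,y,z) = (𝔊(x,y,z), 𝔊(y,z,x), 𝔊(z,x,y)). Then V has octahedral symmetry: for ε equal to any of the matrices α = [[1,0,0],[0,−1,0],[0,0,−1]], γ = [[0,1,0],[0,0,1],[1,0,0]], or δ = [[0,1,0],[1,0,0],[0,0,−1]], one has ε⁻¹ ∘ V ∘ ε = V (hence this holds for every ε in the octahedral group 𝕆 = ⟨α,γ,δ⟩ of order 24). -/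
import Mathlib


noncomputable section

open Real

/-- The standard harmonic polynomial `P_n(x,y) = Re((x+iy)^n)`. -/
def polyP (n : ℕ) (x y : ℝ) : ℝ := ((x + y * Complex.I) ^ n).re

/-- The standard harmonic polynomial `Q_n(x,y) = Im((x+iy)^n)`. -/
def polyQ (n : ℕ) (x y : ℝ) : ℝ := ((x + y * Complex.I) ^ n).im

/-- Partial derivative in the `i`-th coordinate direction. -/
def pd (i : Fin 3) (F : (Fin 3 → ℝ) → ℝ) : (Fin 3 → ℝ) → ℝ :=
  fun v => deriv (fun t => F (Function.update v i t)) (v i)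

/-- Divergence of a vector field on ℝ³. -/
def div3 (V : (Fin 3 → ℝ) → (Fin 3 → ℝ)) : (Fin 3 → ℝ) → ℝ :=
  fun v => pd 0 (fun w => V w 0) v + pd 1 (fun w => V w 1) v + pd 2 (fun w => V w 2) v

/-- Curl of a vector field on ℝ³. -/
def curl3 (V : (Fin 3 → ℝ) → (Fin 3 → ℝ)) : (Fin 3 → ℝ) → (Fin 3 → ℝ) :=
  fun v => ![pd 1 (fun w => V w 2) v - pd 2 (fun w => V w 1) v,
             pd 2 (fun w => V w 0) v - pd 0 (fun w => V w 2) v,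
             pd 0 (fun w => V w 1) v - pd 1 (fun w => V w 0) v]

/-- Laplacian of a scalar function on ℝ³. -/
def lap3 (F : (Fin 3 → ℝ) → ℝ) : (Fin 3 → ℝ) → ℝ :=
  fun v => pd 0 (pd 0 F) v + pd 1 (pd 1 F) v + pd 2 (pd 2 F) v

/-- `P_k` extended to integer indices, with `P_k = 0` for `k ≤ 0`. -/
def polyPz (k : ℤ) (x y : ℝ) : ℝ :=
  if k ≤ 0 then 0 else ((x + y * Complex.I) ^ k.toNat).re

/-- `Q_k` extended to integer indices, with `Q_k = 0` for `k ≤ 0`. -/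
def polyQz (k : ℤ) (x y : ℝ) : ℝ :=
  if k ≤ 0 then 0 else ((x + y * Complex.I) ^ k.toNat).im

lemma conj_base (x y : ℝ) :
    (starRingEnd ℂ) ((x:ℂ) + (y:ℝ) * Complex.I) = ((x:ℂ) + ((-y:ℝ):ℂ) * Complex.I) := by
  rw [map_add, map_mul, Complex.conj_ofReal, Complex.conj_ofReal, Complex.conj_I]
  push_cast; ring

lemma pow_conj (n : ℕ) (x y : ℝ) :
    ((x:ℂ) + ((-y:ℝ):ℂ) * Complex.I) ^ n
      = (starRingEnd ℂ) (((x:ℂ) + (y:ℝ) * Complex.I) ^ n) := by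
  rw [map_pow, conj_base]

lemma pow_negfst (n : ℕ) (x y : ℝ) :
    (((-x:ℝ):ℂ) + (y:ℝ) * Complex.I) ^ n
      = (-1)^n * (starRingEnd ℂ) (((x:ℂ) + (y:ℝ) * Complex.I) ^ n) := by
  rw [map_pow, conj_base, ← neg_pow]
  congr 1; push_cast; ring

lemma pow_swap (n : ℕ) (x y : ℝ) :
    ((y:ℂ) + (x:ℝ) * Complex.I) ^ n
      = Complex.I ^ n * (starRingEnd ℂ) (((x:ℂ) + (y:ℝ) * Complex.I) ^ n) := by
  rw [map_pow, conj_base, ← mul_pow]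
  congr 1; push_cast
  linear_combination (y:ℂ) * Complex.I_sq

-- Q_{4m+1}
lemma q1n (m : ℕ) (a b : ℝ) : polyQz (4*(m:ℤ)+1) a (-b) = -polyQz (4*(m:ℤ)+1) a b := by
  have h : ¬ (4*(m:ℤ)+1 ≤ 0) := by omega
  simp only [polyQz, if_neg h]
  rw [pow_conj]; exact Complex.conj_im _

lemma q1f (m : ℕ) (a b : ℝ) : polyQz (4*(m:ℤ)+1) (-a) b = polyQz (4*(m:ℤ)+1) a b := by
  have h : ¬ (4*(m:ℤ)+1 ≤ 0) := by omega
  have hN : (4*(m:ℤ)+1).toNat = 4*m+1 := by omega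
  simp only [polyQz, if_neg h, hN]
  rw [pow_negfst, Odd.neg_one_pow ⟨2*m, by ring⟩, neg_one_mul, Complex.neg_im,
    Complex.conj_im, neg_neg]

-- Q_{4m}
lemma q0n (m : ℕ) (a b : ℝ) : polyQz (4*(m:ℤ)) a (-b) = -polyQz (4*(m:ℤ)) a b := by
  rcases Nat.eq_zero_or_pos m with rfl | hm
  · simp [polyQz]
  · have h : ¬ (4*(m:ℤ) ≤ 0) := by omega
    simp only [polyQz, if_neg h]
    rw [pow_conj]; exact Complex.conj_im _

lemma q0f (m : ℕ) (a b : ℝ) : polyQz (4*(m:ℤ)) (-a) b = -polyQz (4*(m:ℤ)) a b := by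
  rcases Nat.eq_zero_or_pos m with rfl | hm
  · simp [polyQz]
  · have h : ¬ (4*(m:ℤ) ≤ 0) := by omega
    have hN : (4*(m:ℤ)).toNat = 4*m := by omega
    simp only [polyQz, if_neg h, hN]
    rw [pow_negfst, Even.neg_one_pow ⟨2*m, by ring⟩, one_mul, Complex.conj_im]

lemma q0s (m : ℕ) (a b : ℝ) : polyQz (4*(m:ℤ)) b a = -polyQz (4*(m:ℤ)) a b := by
  rcases Nat.eq_zero_or_pos m with rfl | hm
  · simp [polyQz]
  · have h : ¬ (4*(m:ℤ) ≤ 0) := by omega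
    have hN : (4*(m:ℤ)).toNat = 4*m := by omega
    simp only [polyQz, if_neg h, hN]
    rw [pow_swap, pow_mul, Complex.I_pow_four, one_pow, one_mul, Complex.conj_im]

-- P_{4m}
lemma p0n (m : ℕ) (a b : ℝ) : polyPz (4*(m:ℤ)) a (-b) = polyPz (4*(m:ℤ)) a b := by
  rcases Nat.eq_zero_or_pos m with rfl | hm
  · simp [polyPz]
  · have h : ¬ (4*(m:ℤ) ≤ 0) := by omega
    simp only [polyPz, if_neg h]
    rw [pow_conj]; exact Complex.conj_re _

lemma p0f (m : ℕ) (a b : ℝ) : polyPz (4*(m:ℤ)) (-a) b = polyPz (4*(m:ℤ)) a b := by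
  rcases Nat.eq_zero_or_pos m with rfl | hm
  · simp [polyPz]
  · have h : ¬ (4*(m:ℤ) ≤ 0) := by omega
    have hN : (4*(m:ℤ)).toNat = 4*m := by omega
    simp only [polyPz, if_neg h, hN]
    rw [pow_negfst, Even.neg_one_pow ⟨2*m, by ring⟩, one_mul, Complex.conj_re]

lemma p0s (m : ℕ) (a b : ℝ) : polyPz (4*(m:ℤ)) b a = polyPz (4*(m:ℤ)) a b := by
  rcases Nat.eq_zero_or_pos m with rfl | hm
  · simp [polyPz]
  · have h : ¬ (4*(m:ℤ) ≤ 0) := by omega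
    have hN : (4*(m:ℤ)).toNat = 4*m := by omega
    simp only [polyPz, if_neg h, hN]
    rw [pow_swap, pow_mul, Complex.I_pow_four, one_pow, one_mul, Complex.conj_re]

-- P_{4m-1}
lemma pmn (m : ℕ) (a b : ℝ) : polyPz (4*(m:ℤ)-1) a (-b) = polyPz (4*(m:ℤ)-1) a b := by
  rcases Nat.eq_zero_or_pos m with rfl | hm
  · simp [polyPz]
  · have h : ¬ (4*(m:ℤ)-1 ≤ 0) := by omega
    simp only [polyPz, if_neg h]
    rw [pow_conj]; exact Complex.conj_re _

lemma pmf (m : ℕ) (a b : ℝ) : polyPz (4*(m:ℤ)-1) (-a) b = -polyPz (4*(m:ℤ)-1) a b := by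
  rcases Nat.eq_zero_or_pos m with rfl | hm
  · simp [polyPz]
  · have h : ¬ (4*(m:ℤ)-1 ≤ 0) := by omega
    have hN : (4*(m:ℤ)-1).toNat = 4*(m-1)+3 := by omega
    simp only [polyPz, if_neg h, hN]
    rw [pow_negfst, Odd.neg_one_pow ⟨2*(m-1)+1, by ring⟩, neg_one_mul,
      Complex.neg_re, Complex.conj_re]

lemma inv_alpha : (!![1,0,0;0,-1,0;0,0,-1] : Matrix (Fin 3) (Fin 3) ℝ)⁻¹
    = !![1,0,0;0,-1,0;0,0,-1] := by
  apply Matrix.inv_eq_right_inv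
  ext i j
  fin_cases i <;> fin_cases j <;>
    simp [Matrix.mul_apply, Fin.sum_univ_three, Matrix.one_apply, Matrix.vecHead, Matrix.vecTail]

lemma inv_gamma : (!![0,1,0;0,0,1;1,0,0] : Matrix (Fin 3) (Fin 3) ℝ)⁻¹
    = !![0,0,1;1,0,0;0,1,0] := by
  apply Matrix.inv_eq_right_inv
  ext i j
  fin_cases i <;> fin_cases j <;>
    simp [Matrix.mul_apply, Fin.sum_univ_three, Matrix.one_apply, Matrix.vecHead, Matrix.vecTail]

lemma inv_delta : (!![0,1,0;1,0,0;0,0,-1] : Matrix (Fin 3) (Fin 3) ℝ)⁻¹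
    = !![0,1,0;1,0,0;0,0,-1] := by
  apply Matrix.inv_eq_right_inv
  ext i j
  fin_cases i <;> fin_cases j <;>
    simp [Matrix.mul_apply, Fin.sum_univ_three, Matrix.one_apply, Matrix.vecHead, Matrix.vecTail]

open Matrix in
/-- the octahedral field of order `4ℓ+1` (with the convention
`P_k = Q_k = 0` for `k ≤ 0`) is invariant under conjugation by the generators
`α`, `γ`, `δ` of the octahedral group `𝕆`. -/
theorem octahedral_symmetry_second (l : ℤ) (hl : 0 ≤ l) :
    let G : ℝ → ℝ → ℝ → ℝ := fun x y z =>
      polyQz (4 * l + 1) x y * Real.sin z - polyQz (4 * l + 1) x z * Real.sin y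
        + (8 * l + 2 : ℝ) * polyQz (4 * l) y z * Real.cos x
        + polyQz (4 * l + 1) z x * Real.cos y + polyQz (4 * l + 1) y x * Real.cos z
        - (8 * l + 2 : ℝ) * polyPz (4 * l) y z * Real.sin x
        + (4 * l : ℝ) * (8 * l + 2 : ℝ) * polyPz (4 * l - 1) x y * Real.cos z
        + (4 * l : ℝ) * (8 * l + 2 : ℝ) * polyPz (4 * l - 1) x z * Real.cos y
    let V : (Fin 3 → ℝ) → (Fin 3 → ℝ) := fun v =>
      ![G (v 0) (v 1) (v 2), G (v 1) (v 2) (v 0), G (v 2) (v 0) (v 1)]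
    let α : Matrix (Fin 3) (Fin 3) ℝ := !![1, 0, 0; 0, -1, 0; 0, 0, -1]
    let γ : Matrix (Fin 3) (Fin 3) ℝ := !![0, 1, 0; 0, 0, 1; 1, 0, 0]
    let δ : Matrix (Fin 3) (Fin 3) ℝ := !![0, 1, 0; 1, 0, 0; 0, 0, -1]
    (∀ v, α⁻¹.mulVec (V (α.mulVec v)) = V v) ∧
    (∀ v, γ⁻¹.mulVec (V (γ.mulVec v)) = V v) ∧
    (∀ v, δ⁻¹.mulVec (V (δ.mulVec v)) = V v) := by
  lift l to ℕ using hl with m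
  refine ⟨?_, ?_, ?_⟩
  · intro v
    rw [inv_alpha]
    funext i
    fin_cases i <;>
      simp [Matrix.mulVec, dotProduct, Fin.sum_univ_three,
        q1n, q1f, q0n, q0f, p0n, p0f, pmn, pmf, Real.sin_neg, Real.cos_neg] <;>
      ring
  · intro v
    rw [inv_gamma]
    funext i
    fin_cases i <;>
      simp [Matrix.mulVec, dotProduct, Fin.sum_univ_three] <;>
      ring
  · intro v
    rw [inv_delta]
    funext i
    fin_cases i
    · simp [Matrix.mulVec, dotProduct, Fin.sum_univ_three,
        q1n, q1f, q0n, q0f, p0n, p0f, pmn, pmf, Real.sin_neg, Real.cos_neg]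
      rw [show polyQz (4*(m:ℤ)) (v 2) (v 1) = -polyQz (4*(m:ℤ)) (v 1) (v 2) from q0s m (v 1) (v 2),
          show polyPz (4*(m:ℤ)) (v 2) (v 1) = polyPz (4*(m:ℤ)) (v 1) (v 2) from p0s m (v 1) (v 2)]
      ring
    · simp [Matrix.mulVec, dotProduct, Fin.sum_univ_three,
        q1n, q1f, q0n, q0f, p0n, p0f, pmn, pmf, Real.sin_neg, Real.cos_neg]
      rw [show polyQz (4*(m:ℤ)) (v 2) (v 0) = -polyQz (4*(m:ℤ)) (v 0) (v 2) from q0s m (v 0) (v 2),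
          show polyPz (4*(m:ℤ)) (v 2) (v 0) = polyPz (4*(m:ℤ)) (v 0) (v 2) from p0s m (v 0) (v 2)]
      ring
    · simp [Matrix.mulVec, dotProduct, Fin.sum_univ_three,
        q1n, q1f, q0n, q0f, p0n, p0f, pmn, pmf, Real.sin_neg, Real.cos_neg]
      rw [show polyQz (4*(m:ℤ)) (v 1) (v 0) = -polyQz (4*(m:ℤ)) (v 0) (v 1) from q0s m (v 0) (v 1),
          show polyPz (4*(m:ℤ)) (v 1) (v 0) = polyPz (4*(m:ℤ)) (v 0) (v 1) from p0s m (v 0) (v 1)]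
      ring
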